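/- arXiv:1707.00875 — 5 statements merged into one kernel-verified Lean document; each statement's English description precedes it below -/
import Mathlib

section
/- Snail lemma (Gabriel–Zisman exact sequence): Let F : A → B be a pointed functor between pointed groupoids, let K(F) be its strong homotopy kernel with projection functor P : K(F) → A, and let D : π₁(B) → π₀(K(F)) be the connecting map. Then the six-term sequence π₁(K(F)) → π₁(A) → π₁(B) → π₀(K(F)) → π₀(A) → π₀(B), with maps π₁(P), π₁(F), D, π₀(P), π₀(F), is exact at each of the four middle terms π₁(A), π₁(B), π₀(K(F)) and π₀(A) (the first three terms are groups, pointed by their identity elements). -/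
/-
Every exactness claim unfolds to a statement about single morphisms, because a morphism
`(a, β) ⟶ (a', β')` of `K(F)` is just `f : a ⟶ a'` with `F f ≫ β' = β`. The only step that
needs a construction is exactness at `π₀(K(F))`: an isomorphism `i : a ≅ *_A` turns `(a, β)`
into the isomorphic object `(*_A, F(i⁻¹) ≫ β)`, which is `D` of the automorphism `F(i⁻¹) ≫ β`.
-/

open CategoryTheory

universe w v₁ v₂ v₃ v₄ u₁ u₂ u₃ u₄

namespace Snail

variable {A : Type u₁} [Groupoid.{v₁} A] {B : Type u₂} [Groupoid.{v₂} B]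

/-- The set of connected components (isomorphism classes of objects) of a groupoid. -/
def Pi0 (A : Type u₁) [Groupoid.{v₁} A] : Type u₁ :=
  Quotient (CategoryTheory.isIsomorphicSetoid A)

/-- The connected component of an object. -/
def pi0 (a : A) : Pi0 A := Quotient.mk (CategoryTheory.isIsomorphicSetoid A) a

/-- The map induced on connected components by a functor; for pointed functors
between pointed groupoids this is the induced pointed map `π₀(F)`. -/
def pi0Map (F : A ⥤ B) : Pi0 A → Pi0 B :=
  Quotient.map F.obj fun _ _ h => Nonempty.map (fun i => F.mapIso i) h

/-- The group homomorphism `π₁(F) : Aut (*_A) →* Aut (*_B)` induced by a pointed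
functor `F` (with `F.obj pA = pB`). -/
def pi1Map (F : A ⥤ B) {pA : A} {pB : B} (h : F.obj pA = pB) : Aut pA →* Aut pB :=
  (Aut.autMulEquivOfIso (eqToIso h)).toMonoidHom.comp (F.mapAut pA)

/-- The strong homotopy kernel `K(F)` of a functor `F : A ⥤ B` with respect to the
basepoint `pB` of `B` : objects are pairs `(a, β : F a ⟶ pB)`. -/
structure HKer (F : A ⥤ B) (pB : B) : Type (max u₁ v₂) where
  pt : A
  arr : F.obj pt ⟶ pB

/-- Morphisms `(a, β) ⟶ (a', β')` in `K(F)` are morphisms `f : a ⟶ a'` of `A` with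
`F.map f ≫ β' = β`. -/
instance hkerGroupoid (F : A ⥤ B) (pB : B) : Groupoid (HKer F pB) where
  Hom x y := { f : x.pt ⟶ y.pt // F.map f ≫ y.arr = x.arr }
  id x := ⟨𝟙 x.pt, by simp⟩
  comp {x y z} f g := ⟨f.1 ≫ g.1, by rw [F.map_comp, Category.assoc, g.2, f.2]⟩
  id_comp f := Subtype.ext (Category.id_comp f.1)
  comp_id f := Subtype.ext (Category.comp_id f.1)
  assoc f g h := Subtype.ext (Category.assoc f.1 g.1 h.1)
  inv {x y} f := ⟨Groupoid.inv f.1, by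
    obtain ⟨g, h⟩ := f
    dsimp only
    rw [← h, ← Category.assoc, ← F.map_comp, Groupoid.inv_comp, F.map_id, Category.id_comp]⟩
  inv_comp f := Subtype.ext (Groupoid.inv_comp f.1)
  comp_inv f := Subtype.ext (Groupoid.comp_inv f.1)

/-- The projection functor `P : K(F) ⥤ A`, `(a, β) ↦ a`, `f ↦ f`. -/
def hkerProj (F : A ⥤ B) (pB : B) : HKer F pB ⥤ A where
  obj x := x.pt
  map f := f.1
  map_id _ := rfl
  map_comp _ _ := rfl

/-- The connecting map `D : π₁(B) → π₀(K(F))`, sending `g ∈ Aut (*_B)` to the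
connected component of the object `(*_A, g)` of `K(F)`. -/
def connecting (F : A ⥤ B) {pA : A} {pB : B} (hF : F.obj pA = pB) :
    Aut pB → Pi0 (HKer F pB) :=
  fun g => pi0 (⟨pA, eqToHom hF ≫ g.hom⟩ : HKer F pB)

lemma pi0_eq_pi0_iff {a a' : A} : pi0 a = pi0 a' ↔ Nonempty (a ≅ a') :=
  Quotient.eq

lemma pi0_surjective : Function.Surjective (pi0 : A → Pi0 A) :=
  Quotient.mk_surjective

lemma pi0Map_pi0 (F : A ⥤ B) (a : A) : pi0Map F (pi0 a) = pi0 (F.obj a) :=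
  rfl

lemma pi1Map_hom (F : A ⥤ B) {pA : A} {pB : B} (hF : F.obj pA = pB) (a : Aut pA) :
    (pi1Map F hF a).hom = eqToHom hF.symm ≫ F.map a.hom ≫ eqToHom hF :=
  rfl

lemma pi1Map_eq_iff (F : A ⥤ B) {pA : A} {pB : B} (hF : F.obj pA = pB) (a : Aut pA)
    (b : Aut pB) : pi1Map F hF a = b ↔ F.map a.hom ≫ eqToHom hF = eqToHom hF ≫ b.hom := by
  subst hF
  rw [Aut.ext_iff, pi1Map_hom]
  simp only [eqToHom_refl, Category.comp_id, Category.id_comp]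

lemma HKer.pi0_eq_pi0_iff {F : A ⥤ B} {pB : B} {x y : HKer F pB} :
    pi0 x = pi0 y ↔ ∃ f : x.pt ⟶ y.pt, F.map f ≫ y.arr = x.arr := by
  rw [Snail.pi0_eq_pi0_iff, (Groupoid.isoEquivHom x y).nonempty_congr]
  exact ⟨fun ⟨f⟩ => ⟨f.1, f.2⟩, fun ⟨f, hf⟩ => ⟨⟨f, hf⟩⟩⟩

lemma pi1Map_eq_one_iff (F : A ⥤ B) {pA : A} {pB : B} (hF : F.obj pA = pB) (a : Aut pA) :
    pi1Map F hF a = 1 ↔ F.map a.hom ≫ eqToHom hF = eqToHom hF := by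
  rw [pi1Map_eq_iff]
  exact Iff.of_eq (congrArg _ (Category.comp_id _))

lemma exists_pi1Map_hkerProj_eq_iff (F : A ⥤ B) {pA : A} {pB : B} (hF : F.obj pA = pB)
    (a : Aut pA) :
    (∃ k : Aut (⟨pA, eqToHom hF⟩ : HKer F pB), pi1Map (hkerProj F pB) rfl k = a) ↔
      pi1Map F hF a = 1 := by
  have hk (k : Aut (⟨pA, eqToHom hF⟩ : HKer F pB)) :
      (pi1Map (hkerProj F pB) rfl k).hom = k.hom.1 := by
    rw [pi1Map_hom]
    simp only [eqToHom_refl, Category.comp_id, Category.id_comp]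
    rfl
  rw [pi1Map_eq_one_iff]
  constructor
  · rintro ⟨k, rfl⟩
    rw [hk]
    exact k.hom.2
  · intro ha
    exact ⟨(Groupoid.isoEquivHom _ _).symm ⟨a.hom, ha⟩, Iso.ext (hk _)⟩

lemma exists_pi1Map_eq_iff_connecting_eq (F : A ⥤ B) {pA : A} {pB : B} (hF : F.obj pA = pB)
    (b : Aut pB) :
    (∃ a : Aut pA, pi1Map F hF a = b) ↔
      connecting F hF b = pi0 (⟨pA, eqToHom hF⟩ : HKer F pB) := by
  simp only [pi1Map_eq_iff, connecting, HKer.pi0_eq_pi0_iff]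
  exact (Groupoid.isoEquivHom pA pA).exists_congr_left

lemma exists_connecting_eq_iff (F : A ⥤ B) {pA : A} {pB : B} (hF : F.obj pA = pB)
    (x : Pi0 (HKer F pB)) :
    (∃ b : Aut pB, connecting F hF b = x) ↔ pi0Map (hkerProj F pB) x = pi0 pA := by
  obtain ⟨⟨a, β⟩, rfl⟩ := pi0_surjective x
  refine ⟨fun ⟨b, hb⟩ => hb ▸ rfl, fun h => ?_⟩
  obtain ⟨i⟩ := pi0_eq_pi0_iff.mp h
  subst hF
  refine ⟨(Groupoid.isoEquivHom _ _).symm (F.map i.inv ≫ β),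
    HKer.pi0_eq_pi0_iff.mpr ⟨i.inv, ?_⟩⟩
  show F.map i.inv ≫ β = eqToHom rfl ≫ F.map i.inv ≫ β
  rw [eqToHom_refl, Category.id_comp]

lemma exists_pi0Map_hkerProj_eq_iff (F : A ⥤ B) (pB : B) (y : Pi0 A) :
    (∃ x : Pi0 (HKer F pB), pi0Map (hkerProj F pB) x = y) ↔ pi0Map F y = pi0 pB := by
  obtain ⟨a, rfl⟩ := pi0_surjective y
  rw [pi0Map_pi0, pi0_eq_pi0_iff]
  constructor
  · rintro ⟨x, hx⟩
    obtain ⟨⟨c, β⟩, rfl⟩ := pi0_surjective x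
    obtain ⟨i⟩ := pi0_eq_pi0_iff.mp hx
    exact ⟨(F.mapIso i).symm ≪≫ (Groupoid.isoEquivHom _ _).symm β⟩
  · rintro ⟨j⟩
    exact ⟨pi0 (⟨a, j.hom⟩ : HKer F pB), rfl⟩

/-- **Snail lemma (Gabriel–Zisman exact sequence).**
For a pointed functor `F : A ⥤ B` between pointed groupoids, the six-term sequence
`π₁(K(F)) → π₁(A) → π₁(B) → π₀(K(F)) → π₀(A) → π₀(B)` (with maps `π₁(P)`, `π₁(F)`,
the connecting map `D`, `π₀(P)`, `π₀(F)`) is exact at the four middle terms. -/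
theorem snail_lemma {A : Type u₁} [Groupoid.{v₁} A] {B : Type u₂} [Groupoid.{v₂} B]
    (F : A ⥤ B) (pA : A) (pB : B) (hF : F.obj pA = pB) :
    -- exactness at π₁(A)
    (∀ a : Aut pA,
      (∃ k : Aut (⟨pA, eqToHom hF⟩ : HKer F pB), pi1Map (hkerProj F pB) rfl k = a) ↔
        pi1Map F hF a = 1) ∧
    -- exactness at π₁(B)
    (∀ b : Aut pB,
      (∃ a : Aut pA, pi1Map F hF a = b) ↔
        connecting F hF b = pi0 (⟨pA, eqToHom hF⟩ : HKer F pB)) ∧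
    -- exactness at π₀(K(F))
    (∀ x : Pi0 (HKer F pB),
      (∃ b : Aut pB, connecting F hF b = x) ↔ pi0Map (hkerProj F pB) x = pi0 pA) ∧
    -- exactness at π₀(A)
    (∀ y : Pi0 A,
      (∃ x : Pi0 (HKer F pB), pi0Map (hkerProj F pB) x = y) ↔ pi0Map F y = pi0 pB) := by
  exact ⟨exists_pi1Map_hkerProj_eq_iff F hF, exists_pi1Map_eq_iff_connecting_eq F hF,
    exists_connecting_eq_iff F hF, exists_pi0Map_hkerProj_eq_iff F pB⟩

end Snail
end

section
/- Let F : A → B be a pointed functor between pointed groupoids which is a fibration. Then the canonical comparison functor J : Ker(F) → K(F), sending an object a to (a, id_{*_B}) and a morphism f to f, is fully faithful and essentially surjective, hence an equivalence of groupoids. -/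
open CategoryTheory

universe w v₁ v₂ v₃ v₄ u₁ u₂ u₃ u₄

namespace Snail

variable {A : Type u₁} [Groupoid.{v₁} A] {B : Type u₂} [Groupoid.{v₂} B]

/-- The strict kernel `Ker(F)` of a functor `F : A ⥤ B` with respect to the basepoint
`pB` : objects are the objects `a` of `A` with `F a = pB`. -/
structure SKer (F : A ⥤ B) (pB : B) : Type (max u₁ u₂) where
  pt : A
  base : F.obj pt = pB

/-- Morphisms of the strict kernel are the morphisms `f` of `A` with `F.map f`
equal to the identity of the basepoint (modulo the object identifications). -/
instance skerGroupoid (F : A ⥤ B) (pB : B) : Groupoid (SKer F pB) where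
  Hom x y := { f : x.pt ⟶ y.pt // F.map f ≫ eqToHom y.base = eqToHom x.base }
  id x := ⟨𝟙 x.pt, by simp⟩
  comp {x y z} f g := ⟨f.1 ≫ g.1, by rw [F.map_comp, Category.assoc, g.2, f.2]⟩
  id_comp f := Subtype.ext (Category.id_comp f.1)
  comp_id f := Subtype.ext (Category.comp_id f.1)
  assoc f g h := Subtype.ext (Category.assoc f.1 g.1 h.1)
  inv {x y} f := ⟨Groupoid.inv f.1, by
    obtain ⟨g, h⟩ := f
    dsimp only
    rw [← h, ← Category.assoc, ← F.map_comp, Groupoid.inv_comp, F.map_id, Category.id_comp]⟩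
  inv_comp f := Subtype.ext (Groupoid.inv_comp f.1)
  comp_inv f := Subtype.ext (Groupoid.comp_inv f.1)

/-- The inclusion functor `Ker(F) ⥤ A`. -/
def skerIncl (F : A ⥤ B) (pB : B) : SKer F pB ⥤ A where
  obj x := x.pt
  map f := f.1
  map_id _ := rfl
  map_comp _ _ := rfl

/-- The canonical comparison functor `J : Ker(F) ⥤ K(F)`, sending `a` to
`(a, id)` and `f` to `f`. -/
def kerComparison (F : A ⥤ B) (pB : B) : SKer F pB ⥤ HKer F pB where
  obj x := ⟨x.pt, eqToHom x.base⟩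
  map f := ⟨f.1, f.2⟩
  map_id _ := rfl
  map_comp _ _ := rfl

/-- If the pointed functor `F` is a fibration, the canonical comparison
`J : Ker(F) ⥤ K(F)` is fully faithful and essentially surjective, hence an
equivalence of groupoids. -/
theorem kerComparison_equivalence {A : Type u₁} [Groupoid.{v₁} A] {B : Type u₂}
    [Groupoid.{v₂} B] (F : A ⥤ B) (pA : A) (pB : B) (hF : F.obj pA = pB)
    (hfib : ∀ (a : A) (b : B) (g : F.obj a ⟶ b),
      ∃ (a' : A) (f : a ⟶ a') (h : F.obj a' = b), F.map f ≫ eqToHom h = g) :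
    (∀ x y : SKer F pB,
      Function.Injective fun f : x ⟶ y => (kerComparison F pB).map f) ∧
    (∀ x y : SKer F pB,
      Function.Surjective fun f : x ⟶ y => (kerComparison F pB).map f) ∧
    (∀ k : HKer F pB, ∃ x : SKer F pB, Nonempty ((kerComparison F pB).obj x ≅ k)) ∧
    (kerComparison F pB).IsEquivalence := by
  have hinj : ∀ x y : SKer F pB,
      Function.Injective fun f : x ⟶ y => (kerComparison F pB).map f := by
    intro x y f g h
    exact Subtype.ext (congrArg Subtype.val h)
  have hsurj : ∀ x y : SKer F pB,
      Function.Surjective fun f : x ⟶ y => (kerComparison F pB).map f := by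
    intro x y ⟨g, hg⟩
    exact ⟨⟨g, hg⟩, rfl⟩
  have hess : ∀ k : HKer F pB, ∃ x : SKer F pB,
      Nonempty ((kerComparison F pB).obj x ≅ k) := by
    intro k
    obtain ⟨a', f, h, hf⟩ := hfib k.pt pB k.arr
    refine ⟨⟨a', h⟩, ⟨asIso (⟨Groupoid.inv f, ?_⟩ :
      (kerComparison F pB).obj ⟨a', h⟩ ⟶ k)⟩⟩
    dsimp [kerComparison]
    rw [← hf, ← Category.assoc, ← F.map_comp, Groupoid.inv_comp, F.map_id,
      Category.id_comp]
  refine ⟨hinj, hsurj, hess, ?_⟩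
  have : (kerComparison F pB).Faithful := ⟨fun h => hinj _ _ h⟩
  have : (kerComparison F pB).Full := ⟨fun g => hsurj _ _ g⟩
  have : (kerComparison F pB).EssSurj := ⟨fun k => by
    obtain ⟨x, ⟨e⟩⟩ := hess k; exact ⟨x, ⟨e⟩⟩⟩
  exact { }

end Snail
end

section
/- Let F : A → B be a pointed functor between pointed groupoids, let F(F) be its mapping path groupoid (objects: triples (b, a, β) with β : b → F(a); morphisms (b, a, β) → (b′, a′, β′): pairs (u : b → b′, f : a → a′) with β ≫ F(f) = u ≫ β′; basepoint (*_B, *_A, id)), and let F′ : F(F) → B be the projection (b, a, β) ↦ b. Then the strict kernel Ker(F′) is isomorphic, as a pointed groupoid, to the strong homotopy kernel K(F): the functor sending an object (*_B, a, β : *_B → F(a)) of Ker(F′) to (a, β⁻¹) and a morphism (id, f) to f is an isomorphism of pointed groupoids. -/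
/-!
An object of `Ker(F')` lies over `*_B`, so it is just a pair `(a, β : *_B ⟶ F a)`, and
inverting `β` makes it an object of `K(F)`. The `B`-component of a morphism of `Ker(F')` is
forced to be the identity, and its `A`-component `f` satisfies `β ≫ F f = β'` exactly when
`F f ≫ β'⁻¹ = β⁻¹`.
-/

open CategoryTheory

universe w v₁ v₂ v₃ v₄ u₁ u₂ u₃ u₄

namespace Snail

variable {A : Type u₁} [Groupoid.{v₁} A] {B : Type u₂} [Groupoid.{v₂} B]

/-- The mapping path groupoid `F(F)` of a functor `F : A ⥤ B` : objects are triples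
`(b, a, β : b ⟶ F a)`. -/
structure MPath (F : A ⥤ B) : Type (max u₁ u₂ v₂) where
  base : B
  pt : A
  arr : base ⟶ F.obj pt

/-- Morphisms `(b, a, β) ⟶ (b', a', β')` in `F(F)` are pairs `(u : b ⟶ b', f : a ⟶ a')`
with `β ≫ F.map f = u ≫ β'`. -/
instance mpathGroupoid (F : A ⥤ B) : Groupoid (MPath F) where
  Hom x y := { p : (x.base ⟶ y.base) × (x.pt ⟶ y.pt) // x.arr ≫ F.map p.2 = p.1 ≫ y.arr }
  id x := ⟨(𝟙 x.base, 𝟙 x.pt), by simp⟩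
  comp {x y z} f g := ⟨(f.1.1 ≫ g.1.1, f.1.2 ≫ g.1.2), by
    obtain ⟨⟨u, a⟩, hf⟩ := f
    obtain ⟨⟨v, b⟩, hg⟩ := g
    dsimp only at *
    rw [F.map_comp, ← Category.assoc, hf, Category.assoc, hg, ← Category.assoc]⟩
  id_comp f := Subtype.ext (Prod.ext (Category.id_comp _) (Category.id_comp _))
  comp_id f := Subtype.ext (Prod.ext (Category.comp_id _) (Category.comp_id _))
  assoc f g h := Subtype.ext (Prod.ext (Category.assoc _ _ _) (Category.assoc _ _ _))
  inv {x y} f := ⟨(Groupoid.inv f.1.1, Groupoid.inv f.1.2), by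
    obtain ⟨⟨u, g⟩, h⟩ := f
    dsimp only at *
    rw [Groupoid.inv_eq_inv, Groupoid.inv_eq_inv, F.map_inv, IsIso.comp_inv_eq,
      Category.assoc, h, IsIso.inv_hom_id_assoc]⟩
  inv_comp f := Subtype.ext (Prod.ext (Groupoid.inv_comp _) (Groupoid.inv_comp _))
  comp_inv f := Subtype.ext (Prod.ext (Groupoid.comp_inv _) (Groupoid.comp_inv _))

/-- The projection `F' : F(F) ⥤ B`, `(b, a, β) ↦ b`. -/
def mpathToB (F : A ⥤ B) : MPath F ⥤ B where
  obj x := x.base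
  map f := f.1.1
  map_id _ := rfl
  map_comp _ _ := rfl

/-- The projection `E : F(F) ⥤ A`, `(b, a, β) ↦ a`. -/
def mpathToA (F : A ⥤ B) : MPath F ⥤ A where
  obj x := x.pt
  map f := f.1.2
  map_id _ := rfl
  map_comp _ _ := rfl

/-- A functor between groupoids is a fibration if every morphism starting at an
object in the image can be lifted. -/
def IsFibration {E : Type u₃} [Groupoid.{v₃} E] {B : Type u₂} [Groupoid.{v₂} B]
    (P : E ⥤ B) : Prop :=
  ∀ (e : E) (b : B) (g : P.obj e ⟶ b),
    ∃ (e' : E) (f : e ⟶ e') (h : P.obj e' = b), P.map f ≫ eqToHom h = g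


/-- The canonical functor from the strict kernel of the mapping-path projection
`F' : F(F) ⥤ B` to the strong homotopy kernel `K(F)` : it sends an object
`(*_B, a, β : *_B ⟶ F a)` to `(a, β⁻¹)` and a morphism `(id, f)` to `f`. -/
def mpathKerToHKer (F : A ⥤ B) (pB : B) : SKer (mpathToB F) pB ⥤ HKer F pB where
  obj x := ⟨x.pt.pt, Groupoid.inv x.pt.arr ≫ eqToHom x.base⟩
  map {x y} m := ⟨m.1.1.2, by
    obtain ⟨⟨⟨u, f⟩, hcomm⟩, hbase⟩ := m
    dsimp only [mpathToB] at hbase ⊢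
    dsimp only at hcomm
    simp only [Groupoid.inv_eq_inv]
    have key : x.pt.arr ≫ F.map f ≫ inv y.pt.arr = u := by
      rw [← Category.assoc, hcomm, Category.assoc, IsIso.hom_inv_id, Category.comp_id]
    calc F.map f ≫ inv y.pt.arr ≫ eqToHom y.base
        = inv x.pt.arr ≫ (x.pt.arr ≫ F.map f ≫ inv y.pt.arr) ≫ eqToHom y.base := by
          simp
      _ = inv x.pt.arr ≫ u ≫ eqToHom y.base := by rw [key]
      _ = inv x.pt.arr ≫ eqToHom x.base := by rw [hbase]⟩
  map_id _ := rfl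
  map_comp _ _ := rfl

section MPathKer

theorem SKer.map_val {E : Type u₃} [Groupoid.{v₃} E] (P : E ⥤ B) {pB : B}
    {x y : SKer P pB} (m : x ⟶ y) : P.map m.1 = eqToHom x.base ≫ eqToHom y.base.symm :=
  (comp_eqToHom_iff _ _ _).1 m.2

theorem SKer.hom_ext {E : Type u₃} [Groupoid.{v₃} E] {P : E ⥤ B} {pB : B}
    {x y : SKer P pB} {m m' : x ⟶ y} (h : m.1 = m'.1) : m = m' :=
  Subtype.ext h

theorem MPath.hom_ext {F : A ⥤ B} {x y : MPath F} {m m' : x ⟶ y}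
    (h₁ : m.1.1 = m'.1.1) (h₂ : m.1.2 = m'.1.2) : m = m' :=
  Subtype.ext (Prod.ext h₁ h₂)

variable (F : A ⥤ B) (pB : B)

def mpathKerMk (a : A) (β : pB ⟶ F.obj a) : SKer (mpathToB F) pB :=
  ⟨⟨pB, a, β⟩, rfl⟩

theorem exists_eq_mpathKerMk (x : SKer (mpathToB F) pB) :
    ∃ a β, x = mpathKerMk F pB a β := by
  obtain ⟨⟨b, a, β⟩, hb : b = pB⟩ := x
  subst hb
  exact ⟨a, β, rfl⟩

@[simp]
theorem mpathKerToHKer_obj_mk (a : A) (β : pB ⟶ F.obj a) :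
    (mpathKerToHKer F pB).obj (mpathKerMk F pB a β) = ⟨a, inv β⟩ := by
  simp [mpathKerToHKer, mpathKerMk, Groupoid.inv_eq_inv]

theorem mpathKerToHKer_obj_bijective : Function.Bijective (mpathKerToHKer F pB).obj := by
  refine ⟨fun x y hxy => ?_, fun ⟨a, β⟩ => ⟨mpathKerMk F pB a (inv β), by simp⟩⟩
  obtain ⟨a, β, rfl⟩ := exists_eq_mpathKerMk F pB x
  obtain ⟨a', β', rfl⟩ := exists_eq_mpathKerMk F pB y
  simp only [mpathKerToHKer_obj_mk, HKer.mk.injEq] at hxy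
  obtain ⟨rfl, hβ⟩ := hxy
  rw [(IsIso.inv_eq_inv).1 (eq_of_heq hβ)]

theorem mpathKerToHKer_map_injective (x y : SKer (mpathToB F) pB) :
    Function.Injective fun m : x ⟶ y => (mpathKerToHKer F pB).map m := fun m m' h =>
  SKer.hom_ext <| MPath.hom_ext ((SKer.map_val _ m).trans (SKer.map_val _ m').symm)
    (congrArg Subtype.val h)

theorem mpathKerToHKer_map_surjective (x y : SKer (mpathToB F) pB) :
    Function.Surjective fun m : x ⟶ y => (mpathKerToHKer F pB).map m := by
  obtain ⟨a, β, rfl⟩ := exists_eq_mpathKerMk F pB x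
  obtain ⟨a', β', rfl⟩ := exists_eq_mpathKerMk F pB y
  rintro ⟨f, hf⟩
  have hcomm : β ≫ F.map f = 𝟙 pB ≫ β' := by
    simpa [mpathKerToHKer, mpathKerMk, Groupoid.inv_eq_inv, IsIso.comp_inv_eq,
      IsIso.eq_inv_comp] using hf
  exact ⟨⟨⟨(𝟙 pB, f), hcomm⟩, Category.id_comp _⟩, rfl⟩

end MPathKer

/-- For a pointed functor `F : A ⥤ B`, the strict kernel of the mapping-path
projection `F' : F(F) ⥤ B` is isomorphic, as a pointed groupoid, to the strong
homotopy kernel `K(F)` : the canonical functor preserves basepoints and is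
bijective on objects and on morphisms. -/
theorem mpathKer_iso_hker {A : Type u₁} [Groupoid.{v₁} A] {B : Type u₂}
    [Groupoid.{v₂} B] (F : A ⥤ B) (pA : A) (pB : B) (hF : F.obj pA = pB) :
    (mpathKerToHKer F pB).obj ⟨⟨pB, pA, eqToHom hF.symm⟩, rfl⟩ =
      (⟨pA, eqToHom hF⟩ : HKer F pB) ∧
    Function.Bijective (mpathKerToHKer F pB).obj ∧
    (∀ x y : SKer (mpathToB F) pB,
      Function.Bijective fun m : x ⟶ y => (mpathKerToHKer F pB).map m) :=
  ⟨(mpathKerToHKer_obj_mk F pB pA _).trans (by rw [inv_eqToHom]),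
    mpathKerToHKer_obj_bijective F pB,
    fun x y => ⟨mpathKerToHKer_map_injective F pB x y, mpathKerToHKer_map_surjective F pB x y⟩⟩

end Snail
end

section
/- Let G : B → C be a pointed functor between pointed groupoids, K(G) its strong homotopy kernel and P : K(G) → B the projection. Then the induced pointed map π₀(P) : π₀(K(G)) → π₀(B) surjects onto the preimage of the basepoint of π₀(C) under π₀(G); that is, for every object b of B with G(b) isomorphic to *_C there is an object (b′, β) of K(G) with b′ isomorphic to b. -/
open CategoryTheory

universe w v₁ v₂ v₃ v₄ u₁ u₂ u₃ u₄

namespace Snail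

variable {A : Type u₁} [Groupoid.{v₁} A] {B : Type u₂} [Groupoid.{v₂} B]

variable {C : Type u₃} [Groupoid.{v₃} C]

/-- For a pointed functor `G : B ⥤ C` with strong homotopy kernel `K(G)` and
projection `P : K(G) ⥤ B`, the map `π₀(P)` surjects onto the preimage of the
basepoint of `π₀(C)` under `π₀(G)`; that is, every object `b` of `B` with `G b`
isomorphic to `*_C` is isomorphic to the first component of an object of `K(G)`. -/
theorem pi0_hkerProj_onto_fiber {B : Type u₂} [Groupoid.{v₂} B] {C : Type u₃}
    [Groupoid.{v₃} C] (G : B ⥤ C) (pB : B) (pC : C) (hG : G.obj pB = pC) :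
    (∀ x : Pi0 B, pi0Map G x = pi0 pC →
      ∃ y : Pi0 (HKer G pC), pi0Map (hkerProj G pC) y = x) ∧
    (∀ b : B, Nonempty (G.obj b ≅ pC) →
      ∃ k : HKer G pC, Nonempty (k.pt ≅ b)) := by
  constructor
  · intro x hx
    obtain ⟨b, rfl⟩ := Quotient.exists_rep x
    have : Nonempty (G.obj b ≅ pC) := Quotient.exact hx
    obtain ⟨i⟩ := this
    exact ⟨pi0 (⟨b, i.hom⟩ : HKer G pC), rfl⟩
  · intro b ⟨i⟩
    exact ⟨⟨b, i.hom⟩, ⟨Iso.refl b⟩⟩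

end Snail
end

section
/- π₀ preserves exactness: Let (F, φ, G) be an exact sequence of pointed groupoids, i.e. F : A → B and G : B → C are pointed functors, φ is a family of morphisms φ_a : *_C → G(F(a)) natural in a with φ_{*_A} = id, and the canonical comparison F′ : A → K(G), a ↦ (F(a), φ_a⁻¹), is full and essentially surjective. Then the sequence of pointed sets π₀(A) → π₀(B) → π₀(C), with maps π₀(F) and π₀(G), is exact: the image of π₀(F) equals the preimage of the basepoint of π₀(C) under π₀(G). -/
open CategoryTheory

universe w v₁ v₂ v₃ v₄ u₁ u₂ u₃ u₄

namespace Snail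

variable {A : Type u₁} [Groupoid.{v₁} A] {B : Type u₂} [Groupoid.{v₂} B]

variable {C : Type u₃} [Groupoid.{v₃} C]

/-- The canonical comparison functor `F' : A ⥤ K(G)` associated with pointed
functors `F : A ⥤ B`, `G : B ⥤ C` and a natural family `φ_a : *_C ⟶ G (F a)` :
it sends `a` to `(F a, φ_a⁻¹)` and `f` to `F f`. -/
def exactComparison (F : A ⥤ B) (G : B ⥤ C) {pC : C}
    (φ : (Functor.const A).obj pC ⟶ F ⋙ G) : A ⥤ HKer G pC where
  obj a := ⟨F.obj a, Groupoid.inv (φ.app a)⟩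
  map {a a'} f := ⟨F.map f, by
    have nat := φ.naturality f
    simp only [Functor.comp_map, Functor.const_obj_map, Category.id_comp] at nat
    dsimp only
    simp only [Groupoid.inv_eq_inv]
    rw [IsIso.comp_inv_eq, IsIso.eq_inv_comp, ← nat]
    simp⟩
  map_id a := Subtype.ext (F.map_id a)
  map_comp f g := Subtype.ext (F.map_comp f g)

/-- **`π₀` preserves exactness.** If `(F, φ, G)` is an exact sequence of pointed
groupoids (the comparison `F' : A ⥤ K(G)` is full and essentially surjective), then
`π₀(A) → π₀(B) → π₀(C)` is exact: the image of `π₀(F)` is the preimage of the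
basepoint of `π₀(C)` under `π₀(G)`. -/
theorem pi0_preserves_exactness {A : Type u₁} [Groupoid.{v₁} A] {B : Type u₂}
    [Groupoid.{v₂} B] {C : Type u₃} [Groupoid.{v₃} C]
    (F : A ⥤ B) (G : B ⥤ C) (pA : A) (pB : B) (pC : C)
    (hF : F.obj pA = pB) (hG : G.obj pB = pC)
    (φ : (Functor.const A).obj pC ⟶ F ⋙ G)
    (hφ : φ.app pA = eqToHom (by rw [hF, hG] : pC = G.obj (F.obj pA)))
    (hfull : ∀ x y : A,
      Function.Surjective fun f : x ⟶ y => (exactComparison F G φ).map f)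
    (hess : ∀ k : HKer G pC,
      ∃ a : A, Nonempty ((exactComparison F G φ).obj a ≅ k)) :
    ∀ x : Pi0 B, (∃ y : Pi0 A, pi0Map F y = x) ↔ pi0Map G x = pi0 pC := by
  intro x
  induction x using Quotient.inductionOn with
  | h b =>
    constructor
    · rintro ⟨y, hy⟩
      induction y using Quotient.inductionOn with
      | h a =>
        have hb : Nonempty (F.obj a ≅ b) := Quotient.exact hy
        obtain ⟨i⟩ := hb
        exact Quotient.sound ⟨G.mapIso i.symm ≪≫ (asIso (φ.app a)).symm⟩
    · intro hx
      obtain ⟨i⟩ : Nonempty (G.obj b ≅ pC) := Quotient.exact hx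
      obtain ⟨a, ⟨j⟩⟩ := hess ⟨b, i.hom⟩
      exact ⟨pi0 a, Quotient.sound ⟨Groupoid.isoEquivHom _ _ |>.symm j.hom.1⟩⟩

end Snail
end
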